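/- arXiv:1204.4141 — 4 statements merged into one kernel-verified Lean document; each statement's English description precedes it below -/
import Mathlib

section
/- Let A and C⁰ be d×d positive definite symmetric real matrices, c > 0, and let (C^t) satisfy the recursion C^{t+1} = C^t - η_C^t · c · C^t A C^t. Then for every t ≥ 0, any orthogonal matrix Q that diagonalizes c·√A·C⁰·√A also diagonalizes c·√A·C^t·√A (assuming each C^t remains well-defined, i.e., symmetric). -/
open Matrix
open scoped MatrixOrder

/-!
Whitening by `S = √A` turns the update into `M ↦ M - η M²` for `M = c • S C S`, a polynomial in
`M`. Conjugation by an orthogonal `Q` commutes with it, so `D = Qᵀ M Q` follows `D ↦ D - η D²`,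
and diagonal matrices are closed under this map.
-/

theorem Matrix.IsDiag.mul {n α : Type*} [Fintype n] [DecidableEq n] [NonUnitalNonAssocSemiring α]
    {A B : Matrix n n α} (hA : A.IsDiag) (hB : B.IsDiag) : (A * B).IsDiag := by
  rw [← hA.diagonal_diag, ← hB.diagonal_diag, diagonal_mul_diagonal]
  exact isDiag_diagonal _

section SquareStep

variable {𝕜 R : Type*} [CommRing 𝕜] [Ring R] [Algebra 𝕜 R]

/-- The covariance update written in whitened coordinates. -/
def squareStep (η : 𝕜) (M : R) : R := M - η • (M * M)

theorem conj_squareStep {P Q : R} (hQP : Q * P = 1) (η : 𝕜) (M : R) :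
    P * squareStep η M * Q = squareStep η (P * M * Q) := by
  have hsq : P * (M * M) * Q = P * M * Q * (P * M * Q) := by
    rw [show P * M * Q * (P * M * Q) = P * M * (Q * P) * M * Q by noncomm_ring, hQP]
    noncomm_ring
  rw [squareStep, squareStep, mul_sub, sub_mul, mul_smul_comm, smul_mul_assoc, hsq]

theorem smul_sqrt_conj_covariance_step {S A : R} (hS : S * S = A) (c η : 𝕜) (C : R) :
    c • (S * (C - (η * c) • (C * A * C)) * S) = squareStep η (c • (S * C * S)) := by
  have hsq : S * (C * A * C) * S = S * C * S * (S * C * S) := by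
    rw [← hS]; noncomm_ring
  rw [squareStep, mul_sub, sub_mul, mul_smul_comm, smul_mul_assoc, hsq, smul_sub,
    smul_mul_smul_comm, smul_smul, smul_smul, mul_comm c (η * c), mul_assoc η c c]

end SquareStep

theorem Matrix.IsDiag.squareStep {n α : Type*} [Fintype n] [DecidableEq n] [CommRing α]
    {D : Matrix n n α} (hD : D.IsDiag) (η : α) : (squareStep η D).IsDiag :=
  hD.sub ((hD.mul hD).smul η)

theorem eigenbasis_invariant_general {d : ℕ}
    (A : Matrix (Fin d) (Fin d) ℝ) (hA : A.PosDef)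
    (C : ℕ → Matrix (Fin d) (Fin d) ℝ)
    (c : ℝ) (eta : ℕ → ℝ)
    (hrec : ∀ t, C (t + 1) = C t - (eta t * c) • (C t * A * C t))
    (Q : Matrix (Fin d) (Fin d) ℝ) (hQ' : Q * Qᵀ = 1)
    (hdiag0 : (Qᵀ * (c • (CFC.sqrt A * C 0 * CFC.sqrt A)) * Q).IsDiag) :
    ∀ t, (Qᵀ * (c • (CFC.sqrt A * C t * CFC.sqrt A)) * Q).IsDiag := by
  have hS : CFC.sqrt A * CFC.sqrt A = A := CFC.sqrt_mul_sqrt_self A hA.posSemidef.nonneg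
  intro t
  induction t with
  | zero => exact hdiag0
  | succ t ih =>
    rw [hrec, smul_sqrt_conj_covariance_step hS, conj_squareStep hQ']
    exact ih.squareStep (eta t)

/-- The eigenbasis of √A C^t √A is invariant along the deterministic NGD covariance
    update C^{t+1} = C^t − η_C^t c C^t A C^t. -/
theorem eigenbasis_invariant {d : ℕ}
    (A : Matrix (Fin d) (Fin d) ℝ) (hA : A.PosDef)
    (C : ℕ → Matrix (Fin d) (Fin d) ℝ) (hC0 : (C 0).PosDef)
    (c : ℝ) (hc : 0 < c) (eta : ℕ → ℝ) (heta : ∀ t, 0 < eta t)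
    (hrec : ∀ t, C (t + 1) = C t - (eta t * c) • (C t * A * C t))
    (hsym : ∀ t, (C t).IsSymm)
    (Q : Matrix (Fin d) (Fin d) ℝ) (hQ : Qᵀ * Q = 1) (hQ' : Q * Qᵀ = 1)
    (hdiag0 : (Qᵀ * (c • (CFC.sqrt A * C 0 * CFC.sqrt A)) * Q).IsDiag) :
    ∀ t, (Qᵀ * (c • (CFC.sqrt A * C t * CFC.sqrt A)) * Q).IsDiag :=
  eigenbasis_invariant_general A hA C c eta hrec Q hQ' hdiag0
end

section
/- Let A be a d×d positive definite symmetric matrix and let m^{t+1} = m^t - η_m^t c C^t A m^t, C^{t+1} = C^t - η_C^t c C^t A C^t with c > 0. Assume γ_m ≤ η_m^t λ₁(cAC^t) ≤ 1 and γ_C ≤ η_C^t λ₁(cAC^t) ≤ 1/2 for positive constants γ_m, γ_C. Then limsup_t ‖m^{t+1}‖/‖m^t‖ ≤ 1 - γ_m and limsup_t ‖C^{t+1}‖_F/‖C^t‖_F ≤ 1 - γ_C; in particular ‖m^t‖ → 0 and ‖C^t‖_F → 0. -/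
/-!
Write `A = B²` with `B = √A` and `H_t = B C_t B`. The covariance update becomes
`H_{t+1} = H_t - k_t H_t²` with `k_t = η_C^t c`, so every eigenvalue of `H_t` follows the scalar
map `x ↦ x - k_t x²`, which is increasing below `1 / (2 k_t)`. Hence the extreme eigenvalues
`μ_t ≤ λ_t` follow this map too, and the ratio `r_t = μ_t / λ_t` satisfies
`r_{t+1} ≥ r_t (1 + γ_C (1 - r_t))`, so `1 - r_t → 0` geometrically. The spectrum of the
symmetric matrix `H_t / λ_t - I` lies in `[r_t - 1, 0]`, so its Frobenius norm is at most
`√d (1 - r_t)`, and `C_t A / λ_t - I = B⁻¹ (H_t / λ_t - I) B =: E_t → 0`. Both updates take the form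
`X ↦ (1 - s) X - s E_t X` with `s ∈ [γ, 1]`, so they contract by at most `1 - γ + ‖E_t‖_F`.
-/

open Matrix Filter

/-- Euclidean norm on ℝ^d. -/
noncomputable def eucNorm {d : ℕ} (v : Fin d → ℝ) : ℝ :=
  Real.sqrt (∑ i, v i ^ 2)

/-- Frobenius norm. -/
noncomputable def frobNorm {d : ℕ} (M : Matrix (Fin d) (Fin d) ℝ) : ℝ :=
  Real.sqrt (Mᵀ * M).trace

open scoped ComplexOrder in
/-- The positive semidefinite square root of a positive semidefinite matrix
    (the definition of `Matrix.PosSemidef.sqrt` from the older Mathlib, since removed). -/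
noncomputable def Matrix.PosSemidef.sqrt {n : Type*} [Fintype n] [DecidableEq n]
    {𝕜 : Type*} [RCLike 𝕜] {A : Matrix n n 𝕜} (hA : A.PosSemidef) : Matrix n n 𝕜 :=
  hA.1.eigenvectorUnitary.1 * diagonal ((↑) ∘ (√·) ∘ hA.1.eigenvalues) *
    (star hA.1.eigenvectorUnitary : Matrix n n 𝕜)

open Topology

section Sequences

lemma tendsto_zero_of_eventually_le_mul {u : ℕ → ℝ} {q : ℝ} (hu : ∀ t, 0 ≤ u t) (hq : q < 1)
    (h : ∀ᶠ t in atTop, u (t + 1) ≤ q * u t) : Tendsto u atTop (𝓝 0) := by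
  obtain ⟨N, hN⟩ := eventually_atTop.1 h
  set q' := max q 0
  have hgeom : ∀ n, u (n + N) ≤ q' ^ n * u N := fun n => by
    simpa using le_geom (u := fun n => u (n + N)) (le_max_right _ _) n fun i _ => by
      rw [add_right_comm]
      exact (hN _ (Nat.le_add_left _ _)).trans
        (mul_le_mul_of_nonneg_right (le_max_left _ _) (hu _))
  have hpow : Tendsto (fun n => q' ^ n * u N) atTop (𝓝 0) := by
    simpa using (tendsto_pow_atTop_nhds_zero_of_lt_one (le_max_right _ _)
      (max_lt hq one_pos)).mul_const (u N)
  exact (tendsto_add_atTop_iff_nat N).1 (squeeze_zero (fun n => hu _) hgeom hpow)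

lemma tendsto_zero_of_le_mul {u δ : ℕ → ℝ} {g : ℝ} (hu : ∀ t, 0 ≤ u t) (hg : 0 < g)
    (hδ : Tendsto δ atTop (𝓝 0)) (hstep : ∀ t, u (t + 1) ≤ (1 - g + δ t) * u t) :
    Tendsto u atTop (𝓝 0) := by
  refine tendsto_zero_of_eventually_le_mul hu (q := 1 - g / 2) (by linarith) ?_
  filter_upwards [hδ.eventually (gt_mem_nhds (half_pos hg))] with t ht
  exact (hstep t).trans (mul_le_mul_of_nonneg_right (by linarith) (hu t))

lemma limsup_div_le_of_le_mul {u δ : ℕ → ℝ} {g : ℝ} (hu : ∀ t, 0 ≤ u t) (hg : g ≤ 1)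
    (hδ0 : ∀ t, 0 ≤ δ t) (hδ : Tendsto δ atTop (𝓝 0))
    (hstep : ∀ t, u (t + 1) ≤ (1 - g + δ t) * u t) :
    limsup (fun t => u (t + 1) / u t) atTop ≤ 1 - g := by
  have hlim : Tendsto (fun t => 1 - g + δ t) atTop (𝓝 (1 - g)) := by
    simpa using tendsto_const_nhds.add hδ
  have hratio : ∀ t, u (t + 1) / u t ≤ 1 - g + δ t := fun t => by
    rcases (hu t).eq_or_lt with h | h
    · rw [← h, div_zero]
      linarith [hδ0 t]
    · exact (div_le_iff₀ h).2 (hstep t)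
  rw [← hlim.limsup_eq]
  exact limsup_le_limsup (Eventually.of_forall hratio)
    (isBoundedUnder_of_eventually_ge
      (Eventually.of_forall fun t => div_nonneg (hu _) (hu t))).isCoboundedUnder_le
    hlim.isBoundedUnder_le

lemma tendsto_nhds_one_of_mul_one_add_le {r : ℕ → ℝ} {γ : ℝ} (hγ : 0 < γ) (h0 : 0 < r 0)
    (hle : ∀ t, r t ≤ 1) (hstep : ∀ t, r t * (1 + γ * (1 - r t)) ≤ r (t + 1)) :
    Tendsto r atTop (𝓝 1) := by
  have hsucc : ∀ t, 0 < r t → r t ≤ r (t + 1) := fun t ht =>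
    le_trans (by nlinarith [mul_nonneg (mul_nonneg hγ.le ht.le) (sub_nonneg.2 (hle t))])
      (hstep t)
  have hpos : ∀ t, 0 < r t := fun t => by
    induction t with
    | zero => exact h0
    | succ t ih => exact ih.trans_le (hsucc t ih)
  have hmono : Monotone r := monotone_nat_of_le_succ fun t => hsucc t (hpos t)
  -- `1 - r` contracts by the factor `1 - γ r 0` at each step
  have hgap : Tendsto (fun t => 1 - r t) atTop (𝓝 0) := by
    refine tendsto_zero_of_eventually_le_mul (q := 1 - γ * r 0) (fun t => sub_nonneg.2 (hle t))
      (by nlinarith) (Eventually.of_forall fun t => ?_)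
    nlinarith [hstep t, mul_nonneg (mul_nonneg hγ.le (sub_nonneg.2 (hmono (Nat.zero_le t))))
      (sub_nonneg.2 (hle t))]
  simpa only [sub_sub_cancel, sub_zero] using (tendsto_const_nhds (x := (1 : ℝ))).sub hgap

end Sequences

def quadStep (k x : ℝ) : ℝ := x - k * x ^ 2

section QuadStep

lemma monotoneOn_quadStep {k b : ℝ} (hk : 0 ≤ k) (hb : 2 * (k * b) ≤ 1) :
    MonotoneOn (quadStep k) (Set.Iic b) := by
  intro x hx y hy hxy
  have hxy' : k * (x + y) ≤ 1 := by nlinarith [Set.mem_Iic.1 hx, Set.mem_Iic.1 hy]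
  unfold quadStep
  nlinarith [mul_nonneg (sub_nonneg.2 hxy) (sub_nonneg.2 hxy')]

lemma quadStep_pos {k x : ℝ} (hx : 0 < x) (hkx : k * x < 1) : 0 < quadStep k x := by
  unfold quadStep
  nlinarith

lemma div_mul_one_add_le_quadStep_div {γ k μ l : ℝ} (hγ : 0 ≤ γ) (hμ : 0 < μ) (hμl : μ ≤ l)
    (hγl : γ ≤ k * l) (hkl : k * l < 1) :
    μ / l * (1 + γ * (1 - μ / l)) ≤ quadStep k μ / quadStep k l := by
  have hl : 0 < l := hμ.trans_le hμl
  obtain ⟨r, rfl⟩ : ∃ r, μ = r * l := ⟨μ / l, by field_simp⟩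
  have hr : 0 < r := pos_of_mul_pos_left hμ hl.le
  have hr1 : r ≤ 1 := by nlinarith
  rw [mul_div_cancel_right₀ r hl.ne', le_div_iff₀ (quadStep_pos hl hkl)]
  unfold quadStep
  -- the right side minus the left side is `r l (1 - r) (k l - γ + γ k l)`
  nlinarith [mul_nonneg (mul_nonneg (mul_pos hr hl).le (sub_nonneg.2 hr1))
    (show 0 ≤ k * l - γ + γ * (k * l) by nlinarith)]

lemma isGreatest_isLeast_image_quadStep {S : Set ℝ} {k l μ : ℝ} (hk : 0 ≤ k)
    (hkl : 2 * (k * l) ≤ 1) (hl : IsGreatest S l) (hμ : IsLeast S μ) :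
    IsGreatest (quadStep k '' S) (quadStep k l) ∧ IsLeast (quadStep k '' S) (quadStep k μ) := by
  have hf : MonotoneOn (quadStep k) S := (monotoneOn_quadStep hk hkl).mono fun _ hx => hl.2 hx
  exact ⟨hf.map_isGreatest hl, hf.map_isLeast hμ⟩

theorem pos_and_tendsto_div_of_image_quadStep {S : ℕ → Set ℝ} {l μ k : ℕ → ℝ} {γ : ℝ}
    (hγ : 0 < γ) (hl : ∀ t, IsGreatest (S t) (l t)) (hμ : ∀ t, IsLeast (S t) (μ t))
    (hS : ∀ t, S (t + 1) = quadStep (k t) '' S t)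
    (hk : ∀ t, γ ≤ k t * l t ∧ k t * l t ≤ 1 / 2) (hμ0 : 0 < μ 0) :
    (∀ t, 0 < μ t) ∧ Tendsto (fun t => μ t / l t) atTop (𝓝 1) := by
  have hμl : ∀ t, μ t ≤ l t := fun t => (hμ t).2 (hl t).1
  have hk0 : ∀ t, 0 < μ t → 0 ≤ k t := fun t ht =>
    (pos_of_mul_pos_left (hγ.trans_le (hk t).1) (ht.trans_le (hμl t)).le).le
  have hnext : ∀ t, 0 < μ t →
      l (t + 1) = quadStep (k t) (l t) ∧ μ (t + 1) = quadStep (k t) (μ t) := by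
    intro t ht
    obtain ⟨hgr, hle⟩ :=
      isGreatest_isLeast_image_quadStep (hk0 t ht) (by linarith [(hk t).2]) (hl t) (hμ t)
    rw [← hS t] at hgr hle
    exact ⟨(hl (t + 1)).unique hgr, (hμ (t + 1)).unique hle⟩
  have hpos : ∀ t, 0 < μ t := fun t => by
    induction t with
    | zero => exact hμ0
    | succ t ih =>
      rw [(hnext t ih).2]
      exact quadStep_pos ih
        (by nlinarith [(hk t).2, mul_le_mul_of_nonneg_left (hμl t) (hk0 t ih)])
  refine ⟨hpos, tendsto_nhds_one_of_mul_one_add_le hγ (div_pos hμ0 (hμ0.trans_le (hμl 0)))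
    (fun t => div_le_one_of_le₀ (hμl t) ((hpos t).le.trans (hμl t))) fun t => ?_⟩
  rw [(hnext t (hpos t)).1, (hnext t (hpos t)).2]
  exact div_mul_one_add_le_quadStep_div hγ.le (hpos t) (hμl t) (hk t).1
    (by linarith [(hk t).2])

end QuadStep

namespace Matrix

section Spectral

open scoped ComplexOrder

variable {n 𝕜 : Type*} [Fintype n] [DecidableEq n] [RCLike 𝕜]

lemma IsHermitian.isGreatest_spectrum_iSup_eigenvalues [Nonempty n] {H : Matrix n n 𝕜}
    (hH : H.IsHermitian) : IsGreatest (spectrum ℝ H) (⨆ i, hH.eigenvalues i) := by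
  rw [hH.spectrum_real_eq_range_eigenvalues]
  exact ⟨(Set.range_nonempty _).csSup_mem (Set.finite_range _),
    fun _ hx => le_csSup (Set.finite_range _).bddAbove hx⟩

lemma isLeast_sInf_spectrum {H : Matrix n n 𝕜} (hne : (spectrum ℝ H).Nonempty) :
    IsLeast (spectrum ℝ H) (sInf (spectrum ℝ H)) :=
  ⟨hne.csInf_mem finite_real_spectrum, fun _ hx => csInf_le finite_real_spectrum.bddBelow hx⟩

lemma IsHermitian.trace_cfc {H : Matrix n n 𝕜} (hH : H.IsHermitian) (f : ℝ → ℝ) :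
    (cfc f H).trace = ∑ i, (f (hH.eigenvalues i) : 𝕜) := by
  rw [hH.cfc_eq, IsHermitian.cfc, Unitary.conjStarAlgAut_apply, trace_mul_cycle,
    Unitary.coe_star_mul_self, Matrix.one_mul, trace_diagonal]
  rfl

lemma IsHermitian.cfc_quadStep {H : Matrix n n 𝕜} (hH : H.IsHermitian) (k : ℝ) :
    cfc (quadStep k) H = H - k • (H * H) := by
  have : IsSelfAdjoint H := hH
  rw [show quadStep k = fun x => x - k * x ^ 2 from rfl,
    cfc_sub (fun x => x) (fun x => k * x ^ 2) H, cfc_id' ℝ H, cfc_const_mul k (fun x => x ^ 2) H,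
    cfc_pow_id H 2, sq]

lemma IsHermitian.cfc_mul_sub_one {H : Matrix n n 𝕜} (hH : H.IsHermitian) (a : ℝ) :
    cfc (fun x => a * x - 1) H = a • H - 1 := by
  have : IsSelfAdjoint H := hH
  rw [cfc_sub (fun x => a * x) (fun _ => 1) H, cfc_const_mul_id a H, cfc_const_one ℝ H]

lemma PosSemidef.sqrt_eq_cfc {A : Matrix n n 𝕜} (hA : A.PosSemidef) :
    hA.sqrt = cfc Real.sqrt A := by
  rw [hA.1.cfc_eq, IsHermitian.cfc, Unitary.conjStarAlgAut_apply]
  rfl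

lemma PosSemidef.isHermitian_sqrt {A : Matrix n n 𝕜} (hA : A.PosSemidef) :
    hA.sqrt.IsHermitian := by
  rw [hA.sqrt_eq_cfc]
  exact cfc_predicate _ _

lemma PosSemidef.sqrt_mul_self {A : Matrix n n 𝕜} (hA : A.PosSemidef) :
    hA.sqrt * hA.sqrt = A := by
  have : IsSelfAdjoint A := hA.1
  rw [hA.sqrt_eq_cfc, ← cfc_mul _ _ A (finite_real_spectrum.continuousOn _)
    (finite_real_spectrum.continuousOn _)]
  refine (cfc_congr fun x hx => Real.mul_self_sqrt ?_).trans (cfc_id' ℝ A)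
  obtain ⟨i, rfl⟩ := hA.1.spectrum_real_eq_range_eigenvalues ▸ hx
  exact hA.eigenvalues_nonneg i

end Spectral

variable {d : ℕ}

lemma IsHermitian.frobNorm_cfc_le {H : Matrix (Fin d) (Fin d) ℝ} (hH : H.IsHermitian)
    {f : ℝ → ℝ} {ε : ℝ} (hε : 0 ≤ ε) (hf : ∀ x ∈ spectrum ℝ H, |f x| ≤ ε) :
    frobNorm (cfc f H) ≤ √d * ε := by
  have hsymm : (cfc f H)ᵀ = cfc f H := (cfc_predicate f H : IsSelfAdjoint _)
  have hsq : (cfc f H)ᵀ * cfc f H = cfc (fun x => f x ^ 2) H := by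
    rw [hsymm, ← cfc_mul f f H (finite_real_spectrum.continuousOn _)
      (finite_real_spectrum.continuousOn _)]
    simp only [sq]
  rw [frobNorm, hsq, hH.trace_cfc, ← Real.sqrt_sq hε, ← Real.sqrt_mul (Nat.cast_nonneg d)]
  refine Real.sqrt_le_sqrt ?_
  calc ∑ i, (f (hH.eigenvalues i) ^ 2 : ℝ) ≤ ∑ _i : Fin d, ε ^ 2 :=
        Finset.sum_le_sum fun i _ =>
          sq_le_sq' (abs_le.1 (hf _ (hH.eigenvalues_mem_spectrum_real i))).1
            (abs_le.1 (hf _ (hH.eigenvalues_mem_spectrum_real i))).2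
    _ = d * ε ^ 2 := by simp

theorem tendsto_frobNorm_inv_smul_sub_one {H : ℕ → Matrix (Fin d) (Fin d) ℝ} {l k : ℕ → ℝ}
    {γ : ℝ} (hγ : 0 < γ) (hH0 : (H 0).PosDef) (hrec : ∀ t, H (t + 1) = H t - k t • (H t * H t))
    (hl : ∀ t, IsGreatest (spectrum ℝ (H t)) (l t))
    (hk : ∀ t, γ ≤ k t * l t ∧ k t * l t ≤ 1 / 2) :
    Tendsto (fun t => frobNorm ((l t)⁻¹ • H t - 1)) atTop (𝓝 0) := by
  have hH : ∀ t, (H t).IsHermitian := fun t => by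
    induction t with
    | zero => exact hH0.1
    | succ t ih => rw [hrec t, ← ih.cfc_quadStep]; exact cfc_predicate _ _
  set μ := fun t => sInf (spectrum ℝ (H t))
  have hμ : ∀ t, IsLeast (spectrum ℝ (H t)) (μ t) := fun t => isLeast_sInf_spectrum ⟨_, (hl t).1⟩
  have hμ0 : 0 < μ 0 := by
    obtain ⟨i, hi⟩ := (hH 0).spectrum_real_eq_range_eigenvalues ▸ (hμ 0).1
    rw [← hi]
    exact hH0.eigenvalues_pos i
  have hS : ∀ t, spectrum ℝ (H (t + 1)) = quadStep (k t) '' spectrum ℝ (H t) := fun t => by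
    rw [hrec t, ← (hH t).cfc_quadStep]
    exact cfc_map_spectrum (quadStep (k t)) (H t) (hH t).isSelfAdjoint
      (finite_real_spectrum.continuousOn _)
  obtain ⟨hμpos, hr⟩ := pos_and_tendsto_div_of_image_quadStep hγ hl hμ hS hk hμ0
  have hbound : ∀ t, frobNorm ((l t)⁻¹ • H t - 1) ≤ √d * (1 - μ t / l t) := fun t => by
    have hlpos : 0 < l t := (hμpos t).trans_le ((hμ t).2 (hl t).1)
    rw [← (hH t).cfc_mul_sub_one]
    refine (hH t).frobNorm_cfc_le (sub_nonneg.2 (div_le_one_of_le₀ ((hμ t).2 (hl t).1)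
      hlpos.le)) fun x hx => ?_
    have hx1 : (l t)⁻¹ * x ≤ 1 := by
      rw [← div_eq_inv_mul]; exact div_le_one_of_le₀ ((hl t).2 hx) hlpos.le
    have hx2 : μ t / l t ≤ (l t)⁻¹ * x := by
      rw [← div_eq_inv_mul]; exact div_le_div_of_nonneg_right ((hμ t).2 hx) hlpos.le
    rw [abs_of_nonpos (by linarith)]
    linarith
  refine squeeze_zero (fun t => Real.sqrt_nonneg _) hbound ?_
  simpa using ((tendsto_const_nhds (x := (1 : ℝ))).sub hr).const_mul √(d : ℝ)

section Frobenius

attribute [local instance] frobeniusSeminormedAddCommGroup frobeniusNormedAddCommGroup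
  frobeniusNormedSpace

lemma frobNorm_eq_norm (M : Matrix (Fin d) (Fin d) ℝ) : frobNorm M = ‖M‖ := by
  rw [frobNorm, frobenius_norm_def, Real.sqrt_eq_rpow, trace]
  congr 1
  simp only [diag, mul_apply, transpose_apply, Real.norm_eq_abs, Real.rpow_two, sq,
    abs_mul_abs_self]
  exact Finset.sum_comm

lemma eucNorm_eq_norm_replicateCol (v : Fin d → ℝ) : eucNorm v = ‖replicateCol Unit v‖ := by
  rw [frobenius_norm_replicateCol, EuclideanSpace.norm_eq, eucNorm]
  simp [Real.norm_eq_abs, sq_abs]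

lemma norm_sub_smul_mul_le {p : Type*} [Fintype p] {η c l γ : ℝ} (hγ : 0 < γ)
    (hlo : γ ≤ η * (c * l)) (hhi : η * (c * l) ≤ 1) (M : Matrix (Fin d) (Fin d) ℝ)
    (X : Matrix (Fin d) p ℝ) :
    ‖X - (η * c) • (M * X)‖ ≤ (1 - γ + ‖l⁻¹ • M - 1‖) * ‖X‖ := by
  set s := η * (c * l)
  have hl : l ≠ 0 := by rintro rfl; simp [s] at hlo; linarith
  have hX : X - (η * c) • (M * X) = (1 - s) • X - s • ((l⁻¹ • M - 1) * X) := by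
    rw [Matrix.sub_mul, Matrix.one_mul, Matrix.smul_mul, smul_sub, smul_smul, sub_smul, one_smul,
      show s * l⁻¹ = η * c by simp only [s]; field_simp]
    abel
  calc ‖X - (η * c) • (M * X)‖
      ≤ (1 - s) * ‖X‖ + s * (‖l⁻¹ • M - 1‖ * ‖X‖) := by
        rw [hX]
        refine (norm_sub_le _ _).trans (add_le_add ?_ ?_)
        · rw [norm_smul, Real.norm_of_nonneg (by linarith)]
        · rw [norm_smul, Real.norm_of_nonneg (by linarith)]
          exact mul_le_mul_of_nonneg_left (frobenius_norm_mul _ _) (by linarith)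
    _ ≤ (1 - γ + ‖l⁻¹ • M - 1‖) * ‖X‖ := by
        nlinarith [norm_nonneg X, mul_nonneg (norm_nonneg X) (norm_nonneg (l⁻¹ • M - 1))]

lemma frobNorm_sub_smul_mul_le {η c l γ : ℝ} (hγ : 0 < γ) (hlo : γ ≤ η * (c * l))
    (hhi : η * (c * l) ≤ 1) (M X : Matrix (Fin d) (Fin d) ℝ) :
    frobNorm (X - (η * c) • (M * X)) ≤ (1 - γ + frobNorm (l⁻¹ • M - 1)) * frobNorm X := by
  simpa only [frobNorm_eq_norm] using norm_sub_smul_mul_le hγ hlo hhi M X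

lemma eucNorm_sub_smul_mulVec_le {η c l γ : ℝ} (hγ : 0 < γ) (hlo : γ ≤ η * (c * l))
    (hhi : η * (c * l) ≤ 1) (M : Matrix (Fin d) (Fin d) ℝ) (v : Fin d → ℝ) :
    eucNorm (v - (η * c) • (M *ᵥ v)) ≤ (1 - γ + frobNorm (l⁻¹ • M - 1)) * eucNorm v := by
  rw [eucNorm_eq_norm_replicateCol, eucNorm_eq_norm_replicateCol, frobNorm_eq_norm]
  exact norm_sub_smul_mul_le hγ hlo hhi M (replicateCol Unit v)

theorem tendsto_frobNorm_inv_smul_mul_sub_one {A B : Matrix (Fin d) (Fin d) ℝ}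
    {C : ℕ → Matrix (Fin d) (Fin d) ℝ} {l k : ℕ → ℝ} {γ : ℝ} (hγ : 0 < γ) (hA : A.PosDef)
    (hB : B.IsHermitian) (hBB : B * B = A) (hC0 : (C 0).PosDef)
    (hrec : ∀ t, C (t + 1) = C t - k t • (C t * A * C t))
    (hl : ∀ t, IsGreatest (spectrum ℝ (B * C t * B)) (l t))
    (hk : ∀ t, γ ≤ k t * l t ∧ k t * l t ≤ 1 / 2) :
    Tendsto (fun t => frobNorm ((l t)⁻¹ • (C t * A) - 1)) atTop (𝓝 0) := by
  have hBu : IsUnit B := isUnit_of_mul_isUnit_left (hBB ▸ hA.isUnit)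
  have hH0 : (B * C 0 * B).PosDef := by
    simpa only [hB.eq] using hC0.conjTranspose_mul_mul_same (mulVec_injective_of_isUnit hBu)
  have hH := tendsto_frobNorm_inv_smul_sub_one hγ hH0 (fun t => by
    rw [hrec t, ← hBB]; noncomm_ring) hl hk
  have hconj : ∀ t, (l t)⁻¹ • (C t * A) - 1 = B⁻¹ * ((l t)⁻¹ • (B * C t * B) - 1) * B := fun t => by
    have hBiB : B⁻¹ * B = 1 := nonsing_inv_mul B ((isUnit_iff_isUnit_det B).1 hBu)
    rw [Matrix.mul_sub, Matrix.sub_mul, Matrix.mul_one, hBiB, Matrix.mul_smul, Matrix.smul_mul,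
      ← hBB]
    congr 2
    calc C t * (B * B) = B⁻¹ * B * C t * B * B := by rw [hBiB, Matrix.one_mul, Matrix.mul_assoc]
      _ = B⁻¹ * (B * C t * B) * B := by noncomm_ring
  have hbound : ∀ t, frobNorm ((l t)⁻¹ • (C t * A) - 1)
      ≤ ‖B⁻¹‖ * ‖B‖ * frobNorm ((l t)⁻¹ • (B * C t * B) - 1) := fun t => by
    rw [hconj t, frobNorm_eq_norm, frobNorm_eq_norm, mul_right_comm]
    exact (frobenius_norm_mul _ _).trans
      (mul_le_mul_of_nonneg_right (frobenius_norm_mul _ _) (norm_nonneg B))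
  refine squeeze_zero (fun t => Real.sqrt_nonneg _) hbound ?_
  simpa using hH.const_mul (‖B⁻¹‖ * ‖B‖)

end Frobenius

end Matrix

theorem ngd_linear_convergence_general {d : ℕ} (hd : 0 < d)
    (A : Matrix (Fin d) (Fin d) ℝ) (hA : A.PosDef)
    (m : ℕ → Fin d → ℝ) (C : ℕ → Matrix (Fin d) (Fin d) ℝ) (hC0 : (C 0).PosDef)
    (c : ℝ) (etam etaC : ℕ → ℝ) (gammam gammaC : ℝ)
    (hgm : 0 < gammam) (hgC : 0 < gammaC)
    (hrecm : ∀ t, m (t + 1) = m t - (etam t * c) • ((C t * A).mulVec (m t)))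
    (hrecC : ∀ t, C (t + 1) = C t - (etaC t * c) • (C t * A * C t))
    (hH : ∀ t, (hA.posSemidef.sqrt * C t * hA.posSemidef.sqrt).IsHermitian)
    (hratem : ∀ t, gammam ≤ etam t * (c * ⨆ i, (hH t).eigenvalues i) ∧
        etam t * (c * ⨆ i, (hH t).eigenvalues i) ≤ 1)
    (hrateC : ∀ t, gammaC ≤ etaC t * (c * ⨆ i, (hH t).eigenvalues i) ∧
        etaC t * (c * ⨆ i, (hH t).eigenvalues i) ≤ 1 / 2) :
    limsup (fun t => eucNorm (m (t + 1)) / eucNorm (m t)) atTop ≤ 1 - gammam ∧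
    limsup (fun t => frobNorm (C (t + 1)) / frobNorm (C t)) atTop ≤ 1 - gammaC ∧
    Tendsto (fun t => eucNorm (m t)) atTop (nhds 0) ∧
    Tendsto (fun t => frobNorm (C t)) atTop (nhds 0) := by
  have : Nonempty (Fin d) := ⟨⟨0, hd⟩⟩
  obtain ⟨δ, hδ0, hδ, hm, hC⟩ : ∃ δ : ℕ → ℝ, (∀ t, 0 ≤ δ t) ∧ Tendsto δ atTop (𝓝 0) ∧
      (∀ t, eucNorm (m (t + 1)) ≤ (1 - gammam + δ t) * eucNorm (m t)) ∧
      (∀ t, frobNorm (C (t + 1)) ≤ (1 - gammaC + δ t) * frobNorm (C t)) :=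
    ⟨fun t => frobNorm ((⨆ i, (hH t).eigenvalues i)⁻¹ • (C t * A) - 1),
      fun t => Real.sqrt_nonneg _,
      tendsto_frobNorm_inv_smul_mul_sub_one hgC hA hA.posSemidef.isHermitian_sqrt
        hA.posSemidef.sqrt_mul_self hC0 (k := fun t => etaC t * c) hrecC
        (fun t => (hH t).isGreatest_spectrum_iSup_eigenvalues)
        (fun t => by simpa only [mul_assoc] using hrateC t),
      fun t => hrecm t ▸ eucNorm_sub_smul_mulVec_le hgm (hratem t).1 (hratem t).2 _ _,
      fun t => hrecC t ▸ frobNorm_sub_smul_mul_le hgC (hrateC t).1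
        ((hrateC t).2.trans (by norm_num)) _ _⟩
  have hgm1 : gammam ≤ 1 := (hratem 0).1.trans (hratem 0).2
  have hgC1 : gammaC ≤ 1 := (hrateC 0).1.trans ((hrateC 0).2.trans (by norm_num))
  exact ⟨limsup_div_le_of_le_mul (u := fun t => eucNorm (m t)) (fun _ => Real.sqrt_nonneg _)
      hgm1 hδ0 hδ hm,
    limsup_div_le_of_le_mul (u := fun t => frobNorm (C t)) (fun _ => Real.sqrt_nonneg _)
      hgC1 hδ0 hδ hC,
    tendsto_zero_of_le_mul (u := fun t => eucNorm (m t)) (fun _ => Real.sqrt_nonneg _) hgm hδ hm,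
    tendsto_zero_of_le_mul (u := fun t => frobNorm (C t)) (fun _ => Real.sqrt_nonneg _) hgC hδ hC⟩

/-- Theorem 2: linear convergence of the mean vector and the covariance matrix of
    the deterministic NGD on monotonic convex-quadratic-composite functions. -/
theorem ngd_linear_convergence {d : ℕ} (hd : 0 < d)
    (A : Matrix (Fin d) (Fin d) ℝ) (hA : A.PosDef)
    (m : ℕ → Fin d → ℝ) (C : ℕ → Matrix (Fin d) (Fin d) ℝ) (hC0 : (C 0).PosDef)
    (c : ℝ) (hc : 0 < c) (etam etaC : ℕ → ℝ) (gammam gammaC : ℝ)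
    (hgm : 0 < gammam) (hgC : 0 < gammaC)
    (hrecm : ∀ t, m (t + 1) = m t - (etam t * c) • ((C t * A).mulVec (m t)))
    (hrecC : ∀ t, C (t + 1) = C t - (etaC t * c) • (C t * A * C t))
    (hH : ∀ t, (hA.posSemidef.sqrt * C t * hA.posSemidef.sqrt).IsHermitian)
    (hratem : ∀ t, gammam ≤ etam t * (c * ⨆ i, (hH t).eigenvalues i) ∧
        etam t * (c * ⨆ i, (hH t).eigenvalues i) ≤ 1)
    (hrateC : ∀ t, gammaC ≤ etaC t * (c * ⨆ i, (hH t).eigenvalues i) ∧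
        etaC t * (c * ⨆ i, (hH t).eigenvalues i) ≤ 1 / 2) :
    limsup (fun t => eucNorm (m (t + 1)) / eucNorm (m t)) atTop ≤ 1 - gammam ∧
    limsup (fun t => frobNorm (C (t + 1)) / frobNorm (C t)) atTop ≤ 1 - gammaC ∧
    Tendsto (fun t => eucNorm (m t)) atTop (nhds 0) ∧
    Tendsto (fun t => frobNorm (C t)) atTop (nhds 0) :=
  ngd_linear_convergence_general hd A hA m C hC0 c etam etaC gammam gammaC hgm hgC hrecm hrecC hH
    hratem hrateC
end

section
/- Let (X_i) be i.i.d. random variables and (h_n) a sequence of (random) measurable functions such that h_n(x) → 0 almost surely for almost every x, and such that for some m, E[sup_{j≥m}|h_j(X)|] < ∞ and E[sup_{j≥m}|h_j(X)|] → 0 as m → ∞. Then (1/n)Σ_{i=1}^n h_n(X_i) → 0 almost surely. -/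
/-!
Fix `m`. For `n ≥ m` every `|h_n(X_i)|` is bounded by the tail supremum `G_m(X_i)`, where
`G_m = sup_{j ≥ m} |h_j|`, so `|(1/n) ∑_{i<n} h_n(X_i)| ≤ (1/n) ∑_{i<n} G_m(X_i)`, and by the strong
law of large numbers the right-hand side tends to `E[G_m(X)]` almost surely. Hence the `limsup` of
the left-hand side is at most `E[G_m(X)]` for every `m`, and these expectations tend to `0`.
-/

open MeasureTheory Filter ProbabilityTheory

open scoped Topology

-- On an unbounded tail `⨆` takes the junk value `0`, hence the boundedness hypotheses below.
noncomputable def tailSup (f : ℕ → ℝ) (m : ℕ) : ℝ := ⨆ j : {j : ℕ // m ≤ j}, |f j|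

section TailSup

variable {f : ℕ → ℝ}

lemma tailSup_nonneg (m : ℕ) : 0 ≤ tailSup f m :=
  Real.iSup_nonneg fun _ => abs_nonneg _

lemma bddAbove_range_tail (hf : BddAbove (Set.range fun n => |f n|)) (m : ℕ) :
    BddAbove (Set.range fun j : {j : ℕ // m ≤ j} => |f j|) :=
  hf.mono <| Set.range_subset_iff.2 fun j => Set.mem_range_self (f := fun n => |f n|) j.1

lemma abs_le_tailSup (hf : BddAbove (Set.range fun n => |f n|)) {m n : ℕ} (hmn : m ≤ n) :
    |f n| ≤ tailSup f m :=
  le_ciSup (bddAbove_range_tail hf m) ⟨n, hmn⟩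

lemma tailSup_antitone (hf : BddAbove (Set.range fun n => |f n|)) : Antitone (tailSup f) := by
  intro m m' hmm'
  have : Nonempty {j : ℕ // m' ≤ j} := ⟨⟨m', le_rfl⟩⟩
  exact ciSup_le fun j => abs_le_tailSup hf (hmm'.trans j.2)

end TailSup

section Measure

variable {E : Type*} [MeasurableSpace E] {h : ℕ → E → ℝ}

lemma measurable_tailSup (hmeas : ∀ n, Measurable (h n)) (m : ℕ) :
    Measurable fun x => tailSup (fun n => h n x) m :=
  Measurable.iSup fun j => (hmeas j).abs

lemma integrable_tailSup_of_le {μ : Measure E} (hmeas : ∀ n, Measurable (h n))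
    (hbdd : ∀ᵐ x ∂μ, BddAbove (Set.range fun n => |h n x|)) {m₀ m : ℕ}
    (hint : Integrable (fun x => tailSup (fun n => h n x) m₀) μ) (hm : m₀ ≤ m) :
    Integrable (fun x => tailSup (fun n => h n x) m) μ := by
  refine hint.mono (measurable_tailSup hmeas m).aestronglyMeasurable ?_
  filter_upwards [hbdd] with x hx
  rw [Real.norm_of_nonneg (tailSup_nonneg _), Real.norm_of_nonneg (tailSup_nonneg _)]
  exact tailSup_antitone hx hm

end Measure

theorem strong_law_ae_comp {Ω E : Type*} [MeasurableSpace Ω] [MeasurableSpace E] {μ : Measure Ω}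
    {X : ℕ → Ω → E} (hindep : Pairwise fun i j => IndepFun (X i) (X j) μ)
    (hident : ∀ i, IdentDistrib (X i) (X 0) μ μ) {g : E → ℝ} (hg : Measurable g)
    (hint : Integrable g (μ.map (X 0))) :
    ∀ᵐ ω ∂μ, Tendsto (fun n : ℕ => (∑ i ∈ Finset.range n, g (X i ω)) / n) atTop
      (𝓝 (∫ x, g x ∂μ.map (X 0))) := by
  have hX0 : AEMeasurable (X 0) μ := (hident 0).aemeasurable_fst
  rw [integral_map hX0 hg.aestronglyMeasurable]
  exact strong_law_ae_real (fun i ω => g (X i ω))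
    ((integrable_map_measure hg.aestronglyMeasurable hX0).1 hint)
    (fun i j hij => (hindep hij).comp hg hg) fun i => (hident i).comp hg

lemma tendsto_avg_zero_of_abs_le_of_tendsto_avg {a b : ℕ → ℕ → ℝ} {c : ℕ → ℝ}
    (hc : Tendsto c atTop (𝓝 0))
    (hb : ∀ᶠ m in atTop,
      Tendsto (fun n : ℕ => (∑ i ∈ Finset.range n, b m i) / n) atTop (𝓝 (c m)))
    (hab : ∀ m n, m ≤ n → ∀ i, |a n i| ≤ b m i) :
    Tendsto (fun n : ℕ => (n : ℝ)⁻¹ * ∑ i ∈ Finset.range n, a n i) atTop (𝓝 0) := by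
  rw [NormedAddGroup.tendsto_nhds_zero]
  intro ε hε
  obtain ⟨m, hcm, hbm⟩ := ((hc.eventually_lt_const hε).and hb).exists
  filter_upwards [hbm.eventually_lt_const hcm, eventually_ge_atTop m] with n hn hmn
  calc ‖(n : ℝ)⁻¹ * ∑ i ∈ Finset.range n, a n i‖
      ≤ (n : ℝ)⁻¹ * ∑ i ∈ Finset.range n, |a n i| := by
        rw [Real.norm_eq_abs, abs_mul, abs_inv, Nat.abs_cast]
        gcongr
        exact Finset.abs_sum_le_sum_abs _ _
    _ ≤ (n : ℝ)⁻¹ * ∑ i ∈ Finset.range n, b m i := by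
        gcongr with i
        exact hab m n hmn i
    _ = (∑ i ∈ Finset.range n, b m i) / n := inv_mul_eq_div _ _
    _ < ε := hn

theorem triangular_array_avg_tendsto_zero_general
    {Ω : Type*} [MeasureSpace Ω]
    {E : Type*} [MeasurableSpace E]
    (X : ℕ → Ω → E)
    (hindep : iIndepFun X volume)
    (hident : ∀ i, IdentDistrib (X i) (X 0) volume volume)
    (h : ℕ → E → ℝ) (hmeas : ∀ n, Measurable (h n))
    (hto0 : ∀ᵐ x ∂(volume.map (X 0)), Tendsto (fun n => h n x) atTop (nhds 0))
    (hint : ∃ m₀, Integrable (fun x => ⨆ j : {j : ℕ // m₀ ≤ j}, |h j.1 x|)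
        (volume.map (X 0)))
    (htail : Tendsto
        (fun m => ∫ x, (⨆ j : {j : ℕ // m ≤ j}, |h j.1 x|) ∂(volume.map (X 0)))
        atTop (nhds 0)) :
    ∀ᵐ ω, Tendsto
      (fun n : ℕ => (n : ℝ)⁻¹ * ∑ i ∈ Finset.range n, h n (X i ω)) atTop (nhds 0) := by
  obtain ⟨m₀, hint⟩ := hint
  have hbdd : ∀ᵐ x ∂(volume.map (X 0)), BddAbove (Set.range fun n => |h n x|) :=
    hto0.mono fun x hx => hx.abs.bddAbove_range
  have hbddX : ∀ᵐ ω, ∀ i, BddAbove (Set.range fun n => |h n (X i ω)|) :=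
    ae_all_iff.2 fun i => ae_of_ae_map (hident i).aemeasurable_fst ((hident i).map_eq ▸ hbdd)
  have hslln : ∀ᵐ ω, ∀ m ∈ Set.Ici m₀, Tendsto
      (fun n : ℕ => (∑ i ∈ Finset.range n, tailSup (fun j => h j (X i ω)) m) / n) atTop
      (𝓝 (∫ x, tailSup (fun j => h j x) m ∂(volume.map (X 0)))) :=
    (ae_ball_iff (Set.to_countable _)).2 fun m hm =>
      strong_law_ae_comp (fun i j hij => hindep.indepFun hij) hident (measurable_tailSup hmeas m)
        (integrable_tailSup_of_le hmeas hbdd hint hm)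
  filter_upwards [hbddX, hslln] with ω hωbdd hωslln
  exact tendsto_avg_zero_of_abs_le_of_tendsto_avg htail (eventually_atTop.2 ⟨m₀, hωslln⟩)
    fun m n hmn i => abs_le_tailSup (hωbdd i) hmn

/-- Triangular-array strong law: if h_n → 0 a.e. and the tail suprema are uniformly
    integrable with vanishing expectation, then (1/n)∑_{i<n} h_n(X_i) → 0 a.s. for
    i.i.d. (X_i). -/
theorem triangular_array_avg_tendsto_zero
    {Ω : Type*} [MeasureSpace Ω] [IsProbabilityMeasure (volume : Measure Ω)]
    {E : Type*} [MeasurableSpace E]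
    (X : ℕ → Ω → E) (hXm : ∀ i, Measurable (X i))
    (hindep : iIndepFun X volume)
    (hident : ∀ i, IdentDistrib (X i) (X 0) volume volume)
    (h : ℕ → E → ℝ) (hmeas : ∀ n, Measurable (h n))
    (hto0 : ∀ᵐ x ∂(volume.map (X 0)), Tendsto (fun n => h n x) atTop (nhds 0))
    (hint : ∃ m₀, Integrable (fun x => ⨆ j : {j : ℕ // m₀ ≤ j}, |h j.1 x|)
        (volume.map (X 0)))
    (htail : Tendsto
        (fun m => ∫ x, (⨆ j : {j : ℕ // m ≤ j}, |h j.1 x|) ∂(volume.map (X 0)))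
        atTop (nhds 0)) :
    ∀ᵐ ω, Tendsto
      (fun n : ℕ => (n : ℝ)⁻¹ * ∑ i ∈ Finset.range n, h n (X i ω)) atTop (nhds 0) :=
  triangular_array_avg_tendsto_zero_general X hindep hident h hmeas hto0 hint htail
end

section
/- Let M be a d×d real matrix whose eigenvalues are real and positive (e.g., M = cAC with A, C positive definite symmetric and c > 0) and suppose M/λ₁(M) → I as t → ∞ along a sequence M^t, with scalars γ ≤ η^t λ₁(M^t) ≤ 1. Then limsup_t σ₁(I - η^t M^t) ≤ 1 - γ, where σ₁ denotes the largest singular value. -/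
open Matrix Filter

/-- Largest singular value of a real square matrix. -/
noncomputable def sigmaOne {d : ℕ} (M : Matrix (Fin d) (Fin d) ℝ) : ℝ :=
  Real.sqrt (⨆ i, (Matrix.isHermitian_conjTranspose_mul_self M).eigenvalues i)

/-!
Write `s = η λ₁ ∈ [γ, 1]` and `E = λ₁⁻¹ M - 1`. Then `1 - η M = (1 - s) • 1 - s • E` is a convex
combination, so in the spectral norm, which dominates `σ₁`,
`σ₁(1 - η M) ≤ (1 - s) + s ‖E‖ ≤ 1 - γ + ‖E‖`, and `‖E‖ → 0` by hypothesis.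
-/

theorem Filter.limsup_le_of_le_add_of_tendsto_zero {α : Type*} {l : Filter α} [l.NeBot]
    {f g : α → ℝ} {c : ℝ} (hf : IsCoboundedUnder (· ≤ ·) l f) (hle : ∀ᶠ t in l, f t ≤ c + g t)
    (hg : Tendsto g l (nhds 0)) : limsup f l ≤ c := by
  have hcg : Tendsto (fun t => c + g t) l (nhds c) := by simpa using hg.const_add c
  calc limsup f l ≤ limsup (fun t => c + g t) l :=
        limsup_le_limsup hle hf hcg.isBoundedUnder_le
    _ = c := hcg.limsup_eq

theorem norm_sub_smul_le_of_mem_Icc {E : Type*} [SeminormedAddCommGroup E] [NormedSpace ℝ E]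
    (v x : E) {eta lam : ℝ} (hlam : lam ≠ 0) (hs : eta * lam ∈ Set.Icc (0 : ℝ) 1) :
    ‖v - eta • x‖ ≤ (1 - eta * lam) * ‖v‖ + eta * lam * ‖lam⁻¹ • x - v‖ := by
  have hconvex : v - eta • x = (1 - eta * lam) • v - (eta * lam) • (lam⁻¹ • x - v) := by
    rw [smul_sub, smul_smul, mul_assoc, mul_inv_cancel₀ hlam, mul_one, sub_smul, one_smul]
    abel
  rw [hconvex]
  refine (norm_sub_le _ _).trans_eq ?_
  rw [norm_smul, norm_smul, Real.norm_of_nonneg (sub_nonneg.2 hs.2), Real.norm_of_nonneg hs.1]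

open scoped Matrix.Norms.L2Operator

theorem Matrix.l2_opNorm_one_le {𝕜 n : Type*} [RCLike 𝕜] [Fintype n] [DecidableEq n] :
    ‖(1 : Matrix n n 𝕜)‖ ≤ 1 := by
  rw [cstar_norm_def, map_one]
  exact ContinuousLinearMap.norm_id_le

theorem sigmaOne_le_l2_opNorm {d : ℕ} (A : Matrix (Fin d) (Fin d) ℝ) : sigmaOne A ≤ ‖A‖ := by
  refine Real.sqrt_le_iff.2 ⟨norm_nonneg A, Real.iSup_le (fun i => ?_) (by positivity)⟩
  have : Nonempty (Fin d) := ⟨i⟩ -- makes the spectral norm a `NormOneClass`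
  calc (isHermitian_conjTranspose_mul_self A).eigenvalues i
      ≤ ‖(isHermitian_conjTranspose_mul_self A).eigenvalues i‖ := Real.le_norm_self _
    _ ≤ ‖Aᴴ * A‖ := spectrum.norm_le_norm_of_mem (IsHermitian.eigenvalues_mem_spectrum_real _ i)
    _ = ‖A‖ ^ 2 := by rw [l2_opNorm_conjTranspose_mul_self, sq]

theorem sigmaOne_one_sub_smul_le {d : ℕ} (M : Matrix (Fin d) (Fin d) ℝ) {eta lam gamma : ℝ}
    (hlam : lam ≠ 0) (hgamma : 0 ≤ gamma) (hs : gamma ≤ eta * lam ∧ eta * lam ≤ 1) :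
    sigmaOne (1 - eta • M) ≤ 1 - gamma + ‖lam⁻¹ • M - 1‖ := by
  have hs₀ : 0 ≤ eta * lam := hgamma.trans hs.1
  calc sigmaOne (1 - eta • M) ≤ ‖1 - eta • M‖ := sigmaOne_le_l2_opNorm _
    _ ≤ (1 - eta * lam) * ‖(1 : Matrix (Fin d) (Fin d) ℝ)‖ + eta * lam * ‖lam⁻¹ • M - 1‖ :=
        norm_sub_smul_le_of_mem_Icc 1 M hlam ⟨hs₀, hs.2⟩
    _ ≤ (1 - eta * lam) * 1 + 1 * ‖lam⁻¹ • M - 1‖ := by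
        gcongr
        · linarith [hs.2]
        · exact l2_opNorm_one_le
        · exact hs.2
    _ ≤ 1 - gamma + ‖lam⁻¹ • M - 1‖ := by linarith [hs.1]

theorem limsup_sigmaOne_le_general {d : ℕ}
    (M : ℕ → Matrix (Fin d) (Fin d) ℝ) (lam1 : ℕ → ℝ) (eta : ℕ → ℝ) (gamma : ℝ)
    (hgamma : 0 < gamma) (hlam : ∀ t, 0 < lam1 t)
    (hconv : Tendsto (fun t => (lam1 t)⁻¹ • M t) atTop
      (nhds (1 : Matrix (Fin d) (Fin d) ℝ)))
    (hrate : ∀ t, gamma ≤ eta t * lam1 t ∧ eta t * lam1 t ≤ 1) :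
    limsup (fun t => sigmaOne (1 - eta t • M t)) atTop ≤ 1 - gamma :=
  limsup_le_of_le_add_of_tendsto_zero
    (isCoboundedUnder_le_of_le atTop fun _ => Real.sqrt_nonneg _)
    (.of_forall fun t => sigmaOne_one_sub_smul_le (M t) (hlam t).ne' hgamma.le (hrate t))
    (tendsto_iff_norm_sub_tendsto_zero.1 hconv)

/-- If M^t/λ₁(M^t) → I and γ ≤ η^t λ₁(M^t) ≤ 1 then limsup σ₁(I − η^t M^t) ≤ 1 − γ. -/
theorem limsup_sigmaOne_le {d : ℕ} (hd : 0 < d)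
    (M : ℕ → Matrix (Fin d) (Fin d) ℝ) (lam1 : ℕ → ℝ) (eta : ℕ → ℝ) (gamma : ℝ)
    (hgamma : 0 < gamma) (hlam : ∀ t, 0 < lam1 t)
    (hconv : Tendsto (fun t => (lam1 t)⁻¹ • M t) atTop
      (nhds (1 : Matrix (Fin d) (Fin d) ℝ)))
    (hrate : ∀ t, gamma ≤ eta t * lam1 t ∧ eta t * lam1 t ≤ 1) :
    limsup (fun t => sigmaOne (1 - eta t • M t)) atTop ≤ 1 - gamma :=
  limsup_sigmaOne_le_general M lam1 eta gamma hgamma hlam hconv hrate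
end
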